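/- arXiv:1407.4766 — 2 statements merged into one kernel-verified Lean document; each statement's English description precedes it below -/
import Mathlib

section
/- Let n ≥ 3, let e ∈ ℝⁿ be a unit vector, and for x ∈ ℝⁿ \ {0} let θ(x) ∈ [0, π] be defined by cos θ(x) = ⟨x, e⟩/|x|. Fix angles 0 < θ₁ < θ₂ < π and let Ω = {x ∈ ℝⁿ \ {0} : θ₁ < θ(x) < θ₂}. Let q be a real number with 0 < q < (n−2)/2. Then there exists a constant C > 0, depending only on n, q, θ₁, θ₂, such that for every smooth vector field Y : ℝⁿ → ℝⁿ whose support is compact and contained in ℝⁿ \ {0}, the radial component Y_rad(x) = ⟨Y(x), x/|x|⟩ satisfies ∫_Ω Y_rad(x)² |x|^{−n+2q} dx ≤ C ∫_Ω |𝒟Y(x)|² |x|^{2−n+2q} dx, where (𝒟Y)_{ij} = ∂_i Y_j + ∂_j Y_i and |𝒟Y| is its Frobenius norm. -/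
open MeasureTheory

/-- The angle `θ(x) ∈ [0, π]` between `x ≠ 0` and a unit vector `e`,
defined by `cos θ(x) = ⟨x, e⟩ / |x|`. -/
noncomputable def angleTo {n : ℕ} (e x : EuclideanSpace ℝ (Fin n)) : ℝ :=
  Real.arccos ((inner ℝ x e : ℝ) / ‖x‖)

open Set Metric intervalIntegral
open scoped ENNReal NNReal

theorem polar_aux {n : ℕ} (hn : 0 < n) (f : EuclideanSpace ℝ (Fin n) → ℝ)
    (hf : Integrable f) :
    (∫ x, f x) = (∫ ω : sphere (0 : EuclideanSpace ℝ (Fin n)) 1,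
        (∫ r in Ioi (0:ℝ), (r ^ (n-1)) * f (r • (ω : EuclideanSpace ℝ (Fin n))))
        ∂((volume : Measure (EuclideanSpace ℝ (Fin n))).toSphere)) ∧
      Integrable (fun ω : sphere (0 : EuclideanSpace ℝ (Fin n)) 1 =>
        ∫ r in Ioi (0:ℝ), (r ^ (n-1)) * f (r • (ω : EuclideanSpace ℝ (Fin n))))
        ((volume : Measure (EuclideanSpace ℝ (Fin n))).toSphere) := by
  haveI : Nonempty (Fin n) := ⟨⟨0, hn⟩⟩
  haveI : Nontrivial (EuclideanSpace ℝ (Fin n)) := inferInstance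
  set μ : Measure (EuclideanSpace ℝ (Fin n)) := volume with hμ
  have hdim : Module.finrank ℝ (EuclideanSpace ℝ (Fin n)) = n := finrank_euclideanSpace_fin
  set σ := μ.toSphere with hσ
  set ν := Measure.volumeIoiPow (Module.finrank ℝ (EuclideanSpace ℝ (Fin n)) - 1) with hν
  have hmp := μ.measurePreserving_homeomorphUnitSphereProd
  have hemb := (homeomorphUnitSphereProd (EuclideanSpace ℝ (Fin n))).measurableEmbedding
  set g : (sphere (0 : EuclideanSpace ℝ (Fin n)) 1 × Ioi (0:ℝ)) → ℝ :=
    fun p => f ((p.2 : ℝ) • (p.1 : EuclideanSpace ℝ (Fin n))) with hgdef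
  have hcomp : (f ∘ Subtype.val : ({0}ᶜ : Set (EuclideanSpace ℝ (Fin n))) → ℝ)
      = g ∘ (homeomorphUnitSphereProd (EuclideanSpace ℝ (Fin n))) := by
    funext x
    have hx : (x : EuclideanSpace ℝ (Fin n)) ≠ 0 := x.2
    simp only [hgdef, Function.comp_apply, homeomorphUnitSphereProd_apply_fst_coe,
      homeomorphUnitSphereProd_apply_snd_coe]
    rw [smul_inv_smul₀ (norm_ne_zero_iff.2 hx)]
  have hfs : Integrable (f ∘ Subtype.val) (μ.comap (Subtype.val :
      ({0}ᶜ : Set (EuclideanSpace ℝ (Fin n))) → EuclideanSpace ℝ (Fin n))) := by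
    have h1 : Integrable f (Measure.map (Subtype.val :
        ({0}ᶜ : Set (EuclideanSpace ℝ (Fin n))) → EuclideanSpace ℝ (Fin n))
        (μ.comap Subtype.val)) := by
      rw [map_comap_subtype_coe (measurableSet_singleton _).compl,
        restrict_compl_singleton]
      exact hf
    exact ((MeasurableEmbedding.subtype_coe
      (measurableSet_singleton (0:EuclideanSpace ℝ (Fin n))).compl).integrable_map_iff).mp h1
  have hg : Integrable g (σ.prod ν) := by
    rw [hσ, hν, ← hmp.map_eq, hemb.integrable_map_iff, ← hcomp]
    exact hfs
  have hinner : ∀ ω : sphere (0 : EuclideanSpace ℝ (Fin n)) 1,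
      (∫ r : Ioi (0:ℝ), g (ω, r) ∂ν) =
        ∫ r in Ioi (0:ℝ), (r ^ (n-1)) * f (r • (ω : EuclideanSpace ℝ (Fin n))) := by
    intro ω
    have hνeq : ν = (Measure.comap (Subtype.val : Ioi (0:ℝ) → ℝ) volume).withDensity
        (fun r : Ioi (0:ℝ) =>
          ((Real.toNNReal ((r:ℝ) ^ (Module.finrank ℝ (EuclideanSpace ℝ (Fin n)) - 1))) : ℝ≥0∞)) := by
      simp only [hν, Measure.volumeIoiPow, ENNReal.ofReal]
    rw [hνeq, integral_withDensity_eq_integral_smul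
        ((measurable_subtype_coe.pow_const _).real_toNNReal) (fun r => g (ω, r)),
      integral_subtype_comap measurableSet_Ioi
        (fun a : ℝ => Real.toNNReal (a ^ (Module.finrank ℝ (EuclideanSpace ℝ (Fin n)) - 1)) •
          f (a • (ω : EuclideanSpace ℝ (Fin n))))]
    refine setIntegral_congr_fun measurableSet_Ioi fun r hr => ?_
    have hr' : (0:ℝ) < r := hr
    simp only [NNReal.smul_def, Real.coe_toNNReal _ (pow_nonneg hr'.le _), hdim,
      smul_eq_mul]
  constructor
  · calc ∫ x, f x ∂μ = ∫ x in {(0:EuclideanSpace ℝ (Fin n))}ᶜ, f x ∂μ := by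
          rw [restrict_compl_singleton]
      _ = ∫ x : ({0}ᶜ : Set (EuclideanSpace ℝ (Fin n))), f (x : EuclideanSpace ℝ (Fin n))
            ∂(μ.comap Subtype.val) :=
          (integral_subtype_comap (measurableSet_singleton _).compl f).symm
      _ = ∫ p, g p ∂(σ.prod ν) := by
          rw [← hmp.integral_comp hemb g]
          exact integral_congr_ae (Filter.Eventually.of_forall fun x => congrFun hcomp x)
      _ = ∫ ω, ∫ r : Ioi (0:ℝ), g (ω, r) ∂ν ∂σ := integral_prod g hg
      _ = _ := integral_congr_ae (Filter.Eventually.of_forall fun ω => hinner ω)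
  · exact hg.integral_prod_left.congr (Filter.Eventually.of_forall fun ω => hinner ω)


theorem hardy1d (q a b : ℝ) (hq : 0 < q) (ha : 0 < a) (hab : a ≤ b)
    (G : ℝ → ℝ) (hG : ContDiff ℝ 1 G)
    (hsupp : ∀ r : ℝ, 0 < r → r ∉ Set.Icc a b → G r = 0) :
    ∫ r in Set.Ioi (0:ℝ), G r ^ 2 * r ^ (2*q - 1) ≤
      (1/q^2) * ∫ r in Set.Ioi (0:ℝ), (deriv G r) ^ 2 * r ^ (2*q + 1) := by
  set c : ℝ := a/2 with hc
  set d : ℝ := b+1 with hd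
  have hc0 : 0 < c := by positivity
  have hca : c < a := by rw [hc]; linarith
  have hbd : b < d := by rw [hd]; linarith
  have hcd : c ≤ d := by linarith
  have hGd : Differentiable ℝ G := hG.differentiable (by norm_num)
  have hG' : Continuous (deriv G) := hG.continuous_deriv le_rfl
  have hGc : Continuous G := hG.continuous
  have hcases : ∀ r : ℝ, r ∉ Set.Icc a b → r < a ∨ b < r := by
    intro r h
    rcases lt_or_ge r a with h1 | h1
    · exact Or.inl h1
    · right; by_contra h2; push_neg at h2; exact h ⟨h1, h2⟩
  have hsupp' : ∀ r : ℝ, 0 < r → r ∉ Set.Icc a b → deriv G r = 0 := by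
    intro r hr hrab
    have hev : G =ᶠ[nhds r] (fun _ => (0:ℝ)) := by
      rcases hcases r hrab with h | h
      · filter_upwards [Ioo_mem_nhds hr h] with y hy
        exact hsupp y hy.1 (fun hy' => absurd hy'.1 (not_le.mpr hy.2))
      · filter_upwards [Ioi_mem_nhds h] with y hy
        exact hsupp y (lt_trans (lt_of_lt_of_le ha hab) hy)
          (fun hy' => absurd hy'.2 (not_le.mpr hy))
    rw [hev.deriv_eq]; simp
  set f₁ : ℝ → ℝ := fun r => G r ^ 2 * r ^ (2*q - 1) with hf₁
  set f₂ : ℝ → ℝ := fun r => (deriv G r) ^ 2 * r ^ (2*q + 1) with hf₂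
  have hnotin : ∀ r : ℝ, r ∈ Set.Ioi (0:ℝ) \ Set.Ioc c d → r ∉ Set.Icc a b := by
    intro r hr hic
    have h2 := hr.2
    rw [Set.mem_Ioc, not_and_or] at h2
    rcases h2 with h2 | h2
    · push_neg at h2; linarith [hic.1]
    · push_neg at h2; linarith [hic.2]
  have hvan₁ : ∀ r ∈ Set.Ioi (0:ℝ) \ Set.Ioc c d, f₁ r = 0 := fun r hr => by
    simp [hf₁, hsupp r hr.1 (hnotin r hr)]
  have hvan₂ : ∀ r ∈ Set.Ioi (0:ℝ) \ Set.Ioc c d, f₂ r = 0 := fun r hr => by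
    simp [hf₂, hsupp' r hr.1 (hnotin r hr)]
  have hIoc : Set.Ioc c d ⊆ Set.Ioi (0:ℝ) := fun r hr => lt_trans hc0 hr.1
  -- continuity on Icc c d
  have hcont₁ : ContinuousOn f₁ (Set.Icc c d) := by
    apply ContinuousOn.mul (hGc.continuousOn.pow 2)
    intro r hr
    exact (Real.continuousAt_rpow_const r _ (Or.inl (ne_of_gt (lt_of_lt_of_le hc0 hr.1)))).continuousWithinAt
  have hcont₂ : ContinuousOn f₂ (Set.Icc c d) := by
    apply ContinuousOn.mul ((hG'.continuousOn).pow 2)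
    intro r hr
    exact (Real.continuousAt_rpow_const r _ (Or.inl (ne_of_gt (lt_of_lt_of_le hc0 hr.1)))).continuousWithinAt
  have hint₁ : IntegrableOn f₁ (Set.Ioc c d) := (hcont₁.integrableOn_Icc).mono_set Set.Ioc_subset_Icc_self
  have hint₂ : IntegrableOn f₂ (Set.Ioc c d) := (hcont₂.integrableOn_Icc).mono_set Set.Ioc_subset_Icc_self
  have heq₁ : ∫ r in Set.Ioi (0:ℝ), f₁ r = ∫ r in Set.Ioc c d, f₁ r :=
    setIntegral_eq_of_subset_of_forall_diff_eq_zero measurableSet_Ioi hIoc hvan₁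
  have heq₂ : ∫ r in Set.Ioi (0:ℝ), f₂ r = ∫ r in Set.Ioc c d, f₂ r :=
    setIntegral_eq_of_subset_of_forall_diff_eq_zero measurableSet_Ioi hIoc hvan₂
  set A : ℝ := ∫ r in Set.Ioc c d, f₁ r with hA
  set B : ℝ := ∫ r in Set.Ioc c d, f₂ r with hB
  -- FTC
  set g : ℝ → ℝ := fun r => 2 * G r * deriv G r * r ^ (2*q) with hg
  have hder : ∀ x ∈ Set.uIcc c d, HasDerivAt (fun r => G r ^ 2 * r ^ (2*q))
      (g x + (2*q) * f₁ x) x := by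
    intro x hx
    rw [Set.uIcc_of_le hcd] at hx
    have hx0 : (0:ℝ) < x := lt_of_lt_of_le hc0 hx.1
    have h1 : HasDerivAt (fun r => G r ^ 2) (2 * G x * deriv G x) x := by
      have := ((hGd x).hasDerivAt).fun_pow 2
      simpa [mul_comm, mul_assoc, mul_left_comm] using this
    have h2 : HasDerivAt (fun r : ℝ => r ^ (2*q)) ((2*q) * x ^ (2*q - 1)) x :=
      Real.hasDerivAt_rpow_const (Or.inl (ne_of_gt hx0))
    have := h1.fun_mul h2
    refine this.congr_deriv ?_
    show _ = 2 * G x * deriv G x * x ^ (2*q) + 2*q * (G x ^ 2 * x ^ (2*q-1))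
    ring
  have hcontg : ContinuousOn g (Set.Icc c d) := by
    apply ContinuousOn.mul
    · exact (continuousOn_const.mul hGc.continuousOn).mul hG'.continuousOn
    · intro r hr
      exact (Real.continuousAt_rpow_const r _ (Or.inl (ne_of_gt (lt_of_lt_of_le hc0 hr.1)))).continuousWithinAt
  have hintg : IntegrableOn g (Set.Ioc c d) := (hcontg.integrableOn_Icc).mono_set Set.Ioc_subset_Icc_self
  have hderint : IntervalIntegrable (fun x => g x + (2*q) * f₁ x) volume c d := by
    rw [intervalIntegrable_iff_integrableOn_Ioc_of_le hcd]
    exact hintg.add (hint₁.const_mul _)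
  have hftc : ∫ x in c..d, (g x + (2*q) * f₁ x) = 0 := by
    rw [integral_eq_sub_of_hasDerivAt hder hderint]
    have hGc0 : G c = 0 := hsupp c hc0 (fun h => absurd h.1 (not_le.mpr hca))
    have hGd0 : G d = 0 := hsupp d (by linarith) (fun h => absurd h.2 (not_le.mpr hbd))
    simp [hGc0, hGd0]
  have hsplit : ∫ x in c..d, (g x + (2*q) * f₁ x) =
      (∫ x in Set.Ioc c d, g x) + (2*q) * A := by
    rw [integral_of_le hcd, integral_add hintg (hint₁.const_mul _),
      MeasureTheory.integral_const_mul]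
  have hkey : (2*q) * A = - ∫ x in Set.Ioc c d, g x := by
    rw [hsplit] at hftc; linarith
  have hptwise : ∀ x ∈ Set.Ioc c d, |g x| ≤ q * f₁ x + (1/q) * f₂ x := by
    intro x hx
    have hx0 : (0:ℝ) < x := lt_of_lt_of_le hc0 hx.1.le
    have hxp : (0:ℝ) < x ^ (2*q-1) := Real.rpow_pos_of_pos hx0 _
    have hxq : x ^ (2*q) = x ^ (2*q-1) * x := by
      rw [← Real.rpow_add_one (ne_of_gt hx0)]; ring_nf
    have hxq2 : x ^ (2*q+1) = x ^ (2*q-1) * x^2 := by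
      rw [show (2*q+1) = (2*q-1) + 2 by ring, Real.rpow_add hx0, Real.rpow_two]
    have e1 : |g x| = 2 * |G x| * |deriv G x| * (x ^ (2*q-1) * x) := by
      simp only [hg]
      rw [abs_mul, abs_mul, abs_mul, abs_two, hxq,
        abs_of_pos (mul_pos hxp hx0)]
    have s1 : 2 * |G x| * |deriv G x| * x ≤ q * |G x| ^ 2 + 1/q * (|deriv G x| ^ 2 * x ^ 2) := by
      rw [← mul_le_mul_iff_of_pos_left hq]
      have hrw : q * (q * |G x| ^ 2 + 1/q * (|deriv G x| ^ 2 * x ^ 2))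
          = q^2 * |G x| ^ 2 + |deriv G x| ^ 2 * x ^ 2 := by
        field_simp
      rw [hrw]
      nlinarith [sq_nonneg (q * |G x| - |deriv G x| * x)]
    calc |g x| = (2 * |G x| * |deriv G x| * x) * x ^ (2*q-1) := by rw [e1]; ring
      _ ≤ (q * |G x| ^ 2 + 1/q * (|deriv G x| ^ 2 * x ^ 2)) * x ^ (2*q-1) :=
          mul_le_mul_of_nonneg_right s1 hxp.le
      _ = q * f₁ x + (1/q) * f₂ x := by
          simp only [hf₁, hf₂]
          rw [sq_abs, sq_abs, hxq2]; ring
  have hmono : ∫ x in Set.Ioc c d, |g x| ≤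
      ∫ x in Set.Ioc c d, (q * f₁ x + (1/q) * f₂ x) :=
    setIntegral_mono_on hintg.abs ((hint₁.const_mul q).add (hint₂.const_mul (1/q)))
      measurableSet_Ioc hptwise
  have hrhs : ∫ x in Set.Ioc c d, (q * f₁ x + (1/q) * f₂ x) = q * A + (1/q) * B := by
    rw [MeasureTheory.integral_add (hint₁.const_mul q) (hint₂.const_mul (1/q)),
      MeasureTheory.integral_const_mul, MeasureTheory.integral_const_mul]
  have h2qA : (2*q) * A ≤ q * A + (1/q) * B := by
    calc (2*q) * A = - ∫ x in Set.Ioc c d, g x := hkey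
      _ ≤ |∫ x in Set.Ioc c d, g x| := neg_le_abs _
      _ ≤ ∫ x in Set.Ioc c d, |g x| := by
          simpa [Real.norm_eq_abs] using
            norm_integral_le_integral_norm (μ := volume.restrict (Set.Ioc c d)) g
      _ ≤ q * A + (1/q) * B := by rw [← hrhs]; exact hmono
  have h' : q * A ≤ (1/q) * B := by linarith
  have hfin : A ≤ (1/q^2) * B := by
    calc A = (1/q) * (q * A) := by field_simp
      _ ≤ (1/q) * ((1/q) * B) := mul_le_mul_of_nonneg_left h' (by positivity)
      _ = (1/q^2) * B := by ring
  rw [show (∫ r in Set.Ioi (0:ℝ), G r ^ 2 * r ^ (2*q - 1)) = A from heq₁,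
    show (∫ r in Set.Ioi (0:ℝ), (deriv G r) ^ 2 * r ^ (2*q + 1)) = B from heq₂]
  exact hfin


variable {n : ℕ}

lemma euclid_decomp (ω : EuclideanSpace ℝ (Fin n)) :
    ∑ i : Fin n, ω i • EuclideanSpace.single i (1:ℝ) = ω := by
  ext j
  rw [show ((∑ i : Fin n, ω i • EuclideanSpace.single i (1:ℝ)) j)
      = ∑ i : Fin n, (ω i • EuclideanSpace.single i (1:ℝ)) j by rw [WithLp.ofLp_sum, Finset.sum_apply]]
  simp [EuclideanSpace.single_apply]

lemma coord_fderiv (Y : EuclideanSpace ℝ (Fin n) → EuclideanSpace ℝ (Fin n))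
    (hY : ContDiff ℝ (⊤ : ℕ∞) Y) (x v : EuclideanSpace ℝ (Fin n)) (j : Fin n) :
    fderiv ℝ (fun y => Y y j) x v = (fderiv ℝ Y x v) j := by
  have hdiff : DifferentiableAt ℝ Y x := (hY.differentiable (by simp)) x
  have : fderiv ℝ (fun y => Y y j) x = (EuclideanSpace.proj j).comp (fderiv ℝ Y x) := by
    have h := ((EuclideanSpace.proj (𝕜 := ℝ) j).hasFDerivAt.comp x hdiff.hasFDerivAt).fderiv
    exact h
  rw [this]
  simp

lemma hasDerivAt_radial (Y : EuclideanSpace ℝ (Fin n) → EuclideanSpace ℝ (Fin n))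
    (hY : ContDiff ℝ (⊤ : ℕ∞) Y) (ω : EuclideanSpace ℝ (Fin n)) (r : ℝ) :
    HasDerivAt (fun t : ℝ => (inner ℝ (Y (t • ω)) ω : ℝ))
      (inner ℝ (fderiv ℝ Y (r • ω) ω) ω : ℝ) r := by
  have h1 : HasDerivAt (fun t : ℝ => t • ω) ((1:ℝ) • ω) r := (hasDerivAt_id r).smul_const ω
  have h2 : HasDerivAt (fun t : ℝ => Y (t • ω)) (fderiv ℝ Y (r • ω) ((1:ℝ) • ω)) r :=
    (((hY.differentiable (by simp)) (r • ω)).hasFDerivAt).comp_hasDerivAt r h1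
  rw [one_smul] at h2
  exact (h2.inner ℝ (hasDerivAt_const r ω)).congr_deriv (by simp)

lemma radial_deriv_sq_bound (Y : EuclideanSpace ℝ (Fin n) → EuclideanSpace ℝ (Fin n))
    (hY : ContDiff ℝ (⊤ : ℕ∞) Y) (ω : EuclideanSpace ℝ (Fin n)) (hω : ‖ω‖ = 1)
    (x : EuclideanSpace ℝ (Fin n)) :
    (inner ℝ (fderiv ℝ Y x ω) ω : ℝ) ^ 2 ≤
      (1/4) * ∑ i : Fin n, ∑ j : Fin n,
        (fderiv ℝ (fun y => Y y j) x (EuclideanSpace.single i 1) +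
          fderiv ℝ (fun y => Y y i) x (EuclideanSpace.single j 1)) ^ 2 := by
  set d : Fin n → Fin n → ℝ :=
    fun i j => fderiv ℝ (fun y => Y y j) x (EuclideanSpace.single i 1) with hd
  have hsq : ∑ i : Fin n, ω i ^ 2 = 1 := by
    have h1 : ‖ω‖ = Real.sqrt (∑ i, ω i ^ 2) := by
      rw [EuclideanSpace.norm_eq]
      congr 1
      refine Finset.sum_congr rfl fun i _ => ?_
      rw [Real.norm_eq_abs, sq_abs]
    have h2 : Real.sqrt (∑ i, ω i ^ 2) = 1 := by rw [← h1, hω]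
    have h3 : (0:ℝ) ≤ ∑ i, ω i ^ 2 := Finset.sum_nonneg fun i _ => sq_nonneg _
    nlinarith [Real.sq_sqrt h3]
  -- express inner product in coordinates
  have hexp : (inner ℝ (fderiv ℝ Y x ω) ω : ℝ) = ∑ i : Fin n, ∑ j : Fin n, d i j * (ω i * ω j) := by
    have hω' : (ω : EuclideanSpace ℝ (Fin n)) = ∑ i : Fin n, ω i • EuclideanSpace.single i 1 :=
      (euclid_decomp ω).symm
    calc (inner ℝ (fderiv ℝ Y x ω) ω : ℝ) = ∑ j : Fin n, (fderiv ℝ Y x ω) j * ω j := by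
          rw [PiLp.inner_apply]
          refine Finset.sum_congr rfl fun j _ => ?_
          simp [RCLike.inner_apply, mul_comm]
      _ = ∑ j : Fin n, (∑ i : Fin n, ω i * d i j) * ω j := by
          refine Finset.sum_congr rfl fun j _ => ?_
          congr 1
          rw [← coord_fderiv Y hY x ω j]
          conv_lhs => rw [hω']
          rw [map_sum]
          refine Finset.sum_congr rfl fun i _ => ?_
          rw [ContinuousLinearMap.map_smul, smul_eq_mul]
      _ = ∑ i : Fin n, ∑ j : Fin n, d i j * (ω i * ω j) := by
          rw [Finset.sum_comm]
          refine Finset.sum_congr rfl fun j _ => ?_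
          rw [Finset.sum_mul]
          refine Finset.sum_congr rfl fun i _ => ?_
          ring
  have hsym : (2:ℝ) * (inner ℝ (fderiv ℝ Y x ω) ω : ℝ) =
      ∑ i : Fin n, ∑ j : Fin n, (d i j + d j i) * (ω i * ω j) := by
    rw [hexp]
    have hswap : ∑ i : Fin n, ∑ j : Fin n, d i j * (ω i * ω j)
        = ∑ i : Fin n, ∑ j : Fin n, d j i * (ω i * ω j) := by
      rw [Finset.sum_comm]
      refine Finset.sum_congr rfl fun i _ => Finset.sum_congr rfl fun j _ => ?_
      ring
    have h1 : ∑ i : Fin n, ∑ j : Fin n, (d i j + d j i) * (ω i * ω j)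
        = (∑ i : Fin n, ∑ j : Fin n, d i j * (ω i * ω j))
          + ∑ i : Fin n, ∑ j : Fin n, d j i * (ω i * ω j) := by
      rw [← Finset.sum_add_distrib]
      refine Finset.sum_congr rfl fun i _ => ?_
      rw [← Finset.sum_add_distrib]
      refine Finset.sum_congr rfl fun j _ => ?_
      ring
    rw [h1, ← hswap]
    ring
  have hCS : ((2:ℝ) * (inner ℝ (fderiv ℝ Y x ω) ω : ℝ)) ^ 2 ≤
      (∑ i : Fin n, ∑ j : Fin n, (d i j + d j i) ^ 2) *
        (∑ i : Fin n, ∑ j : Fin n, (ω i * ω j) ^ 2) := by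
    rw [hsym]
    have := Finset.sum_mul_sq_le_sq_mul_sq (Finset.univ : Finset (Fin n × Fin n))
      (fun p => d p.1 p.2 + d p.2 p.1) (fun p => ω p.1 * ω p.2)
    simpa [Fintype.sum_prod_type] using this
  have hω4 : ∑ i : Fin n, ∑ j : Fin n, (ω i * ω j) ^ 2 = 1 := by
    have : ∑ i : Fin n, ∑ j : Fin n, (ω i * ω j) ^ 2
        = (∑ i : Fin n, ω i ^ 2) * (∑ j : Fin n, ω j ^ 2) := by
      rw [Finset.sum_mul_sum]
      refine Finset.sum_congr rfl fun i _ => Finset.sum_congr rfl fun j _ => ?_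
      ring
    rw [this, hsq, one_mul]
  rw [hω4, mul_one] at hCS
  nlinarith [hCS]

/-- Radial-component estimate in the proof of the Korn-type inequality:
on the region `Ω` between two coaxial round cones with vertex at the origin, for
`0 < q < (n-2)/2` there is `C = C(n,q,θ₁,θ₂) > 0` such that the radial component
`Y_rad(x) = ⟨Y(x), x/|x|⟩` satisfies
`∫_Ω Y_rad² |x|^{-n+2q} ≤ C ∫_Ω |𝒟Y|² |x|^{2-n+2q}` for all smooth vector fields `Y`
with compact support in `ℝⁿ \ {0}`. -/
theorem radial_component_estimate_on_cone_region
    (n : ℕ) (hn : 3 ≤ n)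
    (e : EuclideanSpace ℝ (Fin n)) (he : ‖e‖ = 1)
    (θ₁ θ₂ : ℝ) (hθ₁ : 0 < θ₁) (hθ₁₂ : θ₁ < θ₂) (hθ₂ : θ₂ < Real.pi)
    (q : ℝ) (hq0 : 0 < q) (hq1 : q < ((n : ℝ) - 2) / 2) :
    ∃ C : ℝ, 0 < C ∧
      ∀ Y : EuclideanSpace ℝ (Fin n) → EuclideanSpace ℝ (Fin n),
        ContDiff ℝ (⊤ : ℕ∞) Y → HasCompactSupport Y → tsupport Y ⊆ {x | x ≠ 0} →
        ∫ x in {x : EuclideanSpace ℝ (Fin n) |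
            x ≠ 0 ∧ θ₁ < angleTo e x ∧ angleTo e x < θ₂},
            ((inner ℝ (Y x) x : ℝ) / ‖x‖) ^ 2 * ‖x‖ ^ (-(n : ℝ) + 2 * q) ≤
          C * ∫ x in {x : EuclideanSpace ℝ (Fin n) |
              x ≠ 0 ∧ θ₁ < angleTo e x ∧ angleTo e x < θ₂},
              (∑ i : Fin n, ∑ j : Fin n,
                  (fderiv ℝ (fun y => Y y j) x (EuclideanSpace.single i 1) +
                    fderiv ℝ (fun y => Y y i) x (EuclideanSpace.single j 1)) ^ 2) *
                ‖x‖ ^ (2 - (n : ℝ) + 2 * q) := by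
  refine ⟨1/(4*q^2), by positivity, ?_⟩
  intro Y hY hYc hY0
  set Ω : Set (EuclideanSpace ℝ (Fin n)) :=
    {x | x ≠ 0 ∧ θ₁ < angleTo e x ∧ angleTo e x < θ₂} with hΩdef
  -- openness / measurability of Ω
  have hcont_angle : ContinuousOn (angleTo e) ({(0:EuclideanSpace ℝ (Fin n))}ᶜ) := by
    apply Real.continuous_arccos.comp_continuousOn
    apply ContinuousOn.div
    · exact (continuous_id.inner continuous_const).continuousOn
    · exact continuous_norm.continuousOn
    · intro x hx
      simpa [norm_eq_zero] using hx
  have hΩopen : IsOpen Ω := by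
    have hset : Ω = {(0:EuclideanSpace ℝ (Fin n))}ᶜ ∩ (angleTo e) ⁻¹' (Ioo θ₁ θ₂) := by
      ext x
      simp only [hΩdef, Set.mem_setOf_eq, Set.mem_inter_iff, Set.mem_compl_iff,
        Set.mem_singleton_iff, Set.mem_preimage, Set.mem_Ioo]
    rw [hset]
    exact hcont_angle.isOpen_inter_preimage isOpen_compl_singleton isOpen_Ioo
  have hΩmeas : MeasurableSet Ω := hΩopen.measurableSet
  -- annulus bounds for the support
  have h0nmem : (0:EuclideanSpace ℝ (Fin n)) ∉ tsupport Y := fun h => (hY0 h) rfl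
  obtain ⟨ε, hε, hball⟩ := Metric.mem_nhds_iff.mp
    ((isClosed_tsupport Y).isOpen_compl.mem_nhds h0nmem)
  obtain ⟨R, hR⟩ := hYc.isBounded.subset_closedBall 0
  set b : ℝ := max R ε with hbdef
  have hab : ε ≤ b := le_max_right _ _
  have hann : ∀ x ∈ tsupport Y, ε ≤ ‖x‖ ∧ ‖x‖ ≤ b := by
    intro x hx
    constructor
    · by_contra h
      push_neg at h
      exact (hball (mem_ball_zero_iff.mpr h)) hx
    · exact le_trans (mem_closedBall_zero_iff.mp (hR hx)) (le_max_left _ _)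
  -- notation
  set F : EuclideanSpace ℝ (Fin n) → ℝ := fun x => ∑ i : Fin n, ∑ j : Fin n,
    (fderiv ℝ (fun y => Y y j) x (EuclideanSpace.single i 1) +
      fderiv ℝ (fun y => Y y i) x (EuclideanSpace.single j 1)) ^ 2 with hFdef
  have hcoordCD : ∀ j : Fin n, ContDiff ℝ (⊤ : ℕ∞) (fun y => Y y j) := by
    intro j
    have h1 := (EuclideanSpace.proj (𝕜 := ℝ) j).contDiff.comp hY
    have h2 : ((EuclideanSpace.proj (𝕜 := ℝ) j) ∘ Y) = fun y => Y y j := by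
      funext y; simp
    rwa [h2] at h1
  have hdcont : ∀ i j : Fin n,
      Continuous (fun x => fderiv ℝ (fun y => Y y j) x (EuclideanSpace.single i 1)) := by
    intro i j
    have h1 : Continuous (fderiv ℝ (fun y => Y y j)) := (hcoordCD j).continuous_fderiv (by simp)
    exact ((ContinuousLinearMap.apply ℝ ℝ
      (EuclideanSpace.single i (1:ℝ))).continuous).comp h1
  have hFcont : Continuous F := by
    apply continuous_finset_sum
    intro i _
    apply continuous_finset_sum
    intro j _
    exact ((hdcont i j).add (hdcont j i)).pow 2
  have hfd0 : ∀ (j : Fin n) (x : EuclideanSpace ℝ (Fin n)), x ∉ tsupport Y →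
      fderiv ℝ (fun y => Y y j) x = 0 := by
    intro j x hx
    by_contra h
    have hsub : tsupport (fun y => Y y j) ⊆ tsupport Y := by
      apply closure_mono
      intro y hy
      simp only [Function.mem_support] at hy ⊢
      intro hzero
      apply hy
      rw [hzero]
      rfl
    exact hx (hsub (support_fderiv_subset ℝ (f := fun y => Y y j) h))
  have hF0 : ∀ x ∉ tsupport Y, F x = 0 := by
    intro x hx
    simp only [hFdef]
    refine Finset.sum_eq_zero fun i _ => Finset.sum_eq_zero fun j _ => ?_
    rw [hfd0 j x hx, hfd0 i x hx]
    simp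
  set hL : EuclideanSpace ℝ (Fin n) → ℝ :=
    fun x => ((inner ℝ (Y x) x : ℝ) / ‖x‖) ^ 2 * ‖x‖ ^ (-(n:ℝ) + 2*q) with hhL
  set hR : EuclideanSpace ℝ (Fin n) → ℝ :=
    fun x => F x * ‖x‖ ^ (2 - (n:ℝ) + 2*q) with hhR
  have hLzero : ∀ x ∉ tsupport Y, hL x = 0 := by
    intro x hx
    simp [hhL, image_eq_zero_of_notMem_tsupport hx]
  have hRzero : ∀ x ∉ tsupport Y, hR x = 0 := by
    intro x hx
    simp [hhR, hF0 x hx]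
  have hzero_near : ∀ (f : EuclideanSpace ℝ (Fin n) → ℝ), (∀ x ∉ tsupport Y, f x = 0) →
      f =ᶠ[nhds (0:EuclideanSpace ℝ (Fin n))] (fun _ => (0:ℝ)) := by
    intro f hf
    filter_upwards [Metric.ball_mem_nhds (0:EuclideanSpace ℝ (Fin n)) hε] with y hy
    refine hf y fun hmem => ?_
    exact absurd (hann y hmem).1 (not_le.mpr (mem_ball_zero_iff.mp hy))
  have hLcont : Continuous hL := by
    rw [continuous_iff_continuousAt]
    intro x
    by_cases hx : x = (0:EuclideanSpace ℝ (Fin n))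
    · subst hx
      exact ContinuousAt.congr continuousAt_const (hzero_near hL hLzero).symm
    · have hnx : ‖x‖ ≠ 0 := by simpa [norm_eq_zero] using hx
      apply ContinuousAt.mul
      · apply ContinuousAt.pow
        exact ContinuousAt.div ((hY.continuous.inner continuous_id).continuousAt)
          continuous_norm.continuousAt hnx
      · exact (Real.continuousAt_rpow_const ‖x‖ _ (Or.inl hnx)).comp
          continuous_norm.continuousAt
  have hRcont : Continuous hR := by
    rw [continuous_iff_continuousAt]
    intro x
    by_cases hx : x = (0:EuclideanSpace ℝ (Fin n))
    · subst hx
      exact ContinuousAt.congr continuousAt_const (hzero_near hR hRzero).symm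
    · have hnx : ‖x‖ ≠ 0 := by simpa [norm_eq_zero] using hx
      exact ContinuousAt.mul hFcont.continuousAt
        ((Real.continuousAt_rpow_const ‖x‖ _ (Or.inl hnx)).comp
          continuous_norm.continuousAt)
  have hLint : Integrable (Ω.indicator hL) :=
    (hLcont.integrable_of_hasCompactSupport
      (HasCompactSupport.intro hYc hLzero)).indicator hΩmeas
  have hRint : Integrable (Ω.indicator hR) :=
    (hRcont.integrable_of_hasCompactSupport
      (HasCompactSupport.intro hYc hRzero)).indicator hΩmeas
  obtain ⟨hpolarL, hintL⟩ := polar_aux (by omega : 0 < n) (Ω.indicator hL) hLint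
  obtain ⟨hpolarR, hintR⟩ := polar_aux (by omega : 0 < n) (Ω.indicator hR) hRint
  -- pointwise inequality on the sphere
  have hptω : ∀ ω : sphere (0:EuclideanSpace ℝ (Fin n)) 1,
      (∫ r in Ioi (0:ℝ), (r ^ (n-1)) *
          (Ω.indicator hL (r • (ω : EuclideanSpace ℝ (Fin n))))) ≤
        (1/(4*q^2)) * ∫ r in Ioi (0:ℝ), (r ^ (n-1)) *
          (Ω.indicator hR (r • (ω : EuclideanSpace ℝ (Fin n)))) := by
    intro ω
    have hω1 : ‖(ω : EuclideanSpace ℝ (Fin n))‖ = 1 := mem_sphere_zero_iff_norm.mp ω.2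
    have hωne : (ω : EuclideanSpace ℝ (Fin n)) ≠ 0 := by
      intro h
      rw [h] at hω1
      simp at hω1
    have hnorm : ∀ r : ℝ, 0 < r → ‖r • (ω : EuclideanSpace ℝ (Fin n))‖ = r := by
      intro r hr
      rw [norm_smul, hω1, mul_one, Real.norm_eq_abs, abs_of_pos hr]
    have hmem : ∀ r : ℝ, 0 < r →
        ((r • (ω : EuclideanSpace ℝ (Fin n))) ∈ Ω ↔
          (θ₁ < angleTo e (ω : EuclideanSpace ℝ (Fin n)) ∧
            angleTo e (ω : EuclideanSpace ℝ (Fin n)) < θ₂)) := by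
      intro r hr
      have hne : r • (ω : EuclideanSpace ℝ (Fin n)) ≠ 0 := smul_ne_zero (ne_of_gt hr) hωne
      have hang : angleTo e (r • (ω : EuclideanSpace ℝ (Fin n)))
          = angleTo e (ω : EuclideanSpace ℝ (Fin n)) := by
        unfold angleTo
        congr 1
        rw [real_inner_smul_left, hnorm r hr, hω1, div_one,
          mul_div_cancel_left₀ _ (ne_of_gt hr)]
      simp only [hΩdef, Set.mem_setOf_eq, hang]
      exact ⟨fun h => h.2, fun h => ⟨hne, h⟩⟩
    -- support bound for the section
    have hsupp_sec : ∀ r : ℝ, 0 < r → r ∉ Set.Icc ε b →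
        (r • (ω : EuclideanSpace ℝ (Fin n))) ∉ tsupport Y := by
      intro r hr hrIcc hmem'
      obtain ⟨h1, h2⟩ := hann _ hmem'
      rw [hnorm r hr] at h1 h2
      exact hrIcc ⟨h1, h2⟩
    by_cases hS : θ₁ < angleTo e (ω : EuclideanSpace ℝ (Fin n)) ∧
        angleTo e (ω : EuclideanSpace ℝ (Fin n)) < θ₂
    · -- main case
      set G : ℝ → ℝ := fun r => (inner ℝ (Y (r • (ω : EuclideanSpace ℝ (Fin n))))
        (ω : EuclideanSpace ℝ (Fin n)) : ℝ) with hGdef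
      have hGcd : ContDiff ℝ 1 G := by
        have h1 : ContDiff ℝ (⊤ : ℕ∞) (fun r : ℝ => r • (ω : EuclideanSpace ℝ (Fin n))) :=
          contDiff_id.smul contDiff_const
        exact ((hY.comp h1).inner ℝ contDiff_const).of_le (by simp)
      have hGsupp : ∀ r : ℝ, 0 < r → r ∉ Set.Icc ε b → G r = 0 := by
        intro r hr hrIcc
        simp [hGdef, image_eq_zero_of_notMem_tsupport (hsupp_sec r hr hrIcc)]
      have hLrw : Set.EqOn (fun r : ℝ => (r ^ (n-1)) *
          (Ω.indicator hL (r • (ω : EuclideanSpace ℝ (Fin n)))))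
          (fun r => G r ^ 2 * r ^ (2*q - 1)) (Ioi (0:ℝ)) := by
        intro r hr
        have hr' : (0:ℝ) < r := hr
        have hpow : (r:ℝ) ^ (n-1) * r ^ (-(n:ℝ) + 2*q) = r ^ (2*q-1) := by
          rw [← Real.rpow_natCast r (n-1), ← Real.rpow_add hr']
          congr 1
          have hcast : ((n-1:ℕ):ℝ) = (n:ℝ) - 1 := by
            have h1 : (1:ℕ) ≤ n := by omega
            push_cast [Nat.cast_sub h1]
            ring
          rw [hcast]
          ring
        simp only [Set.indicator_of_mem ((hmem r hr').mpr hS), hhL]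
        have hinner : (inner ℝ (Y (r • (ω : EuclideanSpace ℝ (Fin n))))
            (r • (ω : EuclideanSpace ℝ (Fin n))) : ℝ) = r * G r := by
          rw [real_inner_smul_right]
        rw [hinner, hnorm r hr', mul_div_cancel_left₀ _ (ne_of_gt hr')]
        calc r ^ (n-1) * (G r ^ 2 * r ^ (-(n:ℝ) + 2*q))
            = G r ^ 2 * (r ^ (n-1) * r ^ (-(n:ℝ) + 2*q)) := by ring
          _ = G r ^ 2 * r ^ (2*q-1) := by rw [hpow]
      have hRrw : Set.EqOn (fun r : ℝ => (r ^ (n-1)) *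
          (Ω.indicator hR (r • (ω : EuclideanSpace ℝ (Fin n)))))
          (fun r => F (r • (ω : EuclideanSpace ℝ (Fin n))) * r ^ (2*q + 1)) (Ioi (0:ℝ)) := by
        intro r hr
        have hr' : (0:ℝ) < r := hr
        have hpow : (r:ℝ) ^ (n-1) * r ^ (2 - (n:ℝ) + 2*q) = r ^ (2*q+1) := by
          rw [← Real.rpow_natCast r (n-1), ← Real.rpow_add hr']
          congr 1
          have hcast : ((n-1:ℕ):ℝ) = (n:ℝ) - 1 := by
            have h1 : (1:ℕ) ≤ n := by omega
            push_cast [Nat.cast_sub h1]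
            ring
          rw [hcast]
          ring
        simp only [Set.indicator_of_mem ((hmem r hr').mpr hS), hhR]
        rw [hnorm r hr']
        calc r ^ (n-1) * (F (r • (ω : EuclideanSpace ℝ (Fin n))) * r ^ (2 - (n:ℝ) + 2*q))
            = F (r • (ω : EuclideanSpace ℝ (Fin n))) * (r ^ (n-1) * r ^ (2 - (n:ℝ) + 2*q)) := by
              ring
          _ = _ := by rw [hpow]
      rw [setIntegral_congr_fun measurableSet_Ioi hLrw,
        setIntegral_congr_fun measurableSet_Ioi hRrw]
      have hardy := hardy1d q ε b hq0 hε hab G hGcd hGsupp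
      have hderivG : ∀ r : ℝ, deriv G r =
          (inner ℝ (fderiv ℝ Y (r • (ω : EuclideanSpace ℝ (Fin n)))
            (ω : EuclideanSpace ℝ (Fin n))) (ω : EuclideanSpace ℝ (Fin n)) : ℝ) :=
        fun r => (hasDerivAt_radial Y hY (ω : EuclideanSpace ℝ (Fin n)) r).deriv
      -- compare ∫ (deriv G)² r^{2q+1} with ∫ F(r ω) r^{2q+1}
      set c : ℝ := ε/2 with hcdef
      set d : ℝ := b+1 with hddef
      have hc0 : 0 < c := by positivity
      have hcd : c ≤ d := by
        rw [hcdef, hddef]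
        have := hab
        linarith [hε]
      have hnotIcc : ∀ r : ℝ, r ∈ Ioi (0:ℝ) \ Ioc c d → r ∉ Set.Icc ε b := by
        intro r hr hic
        have h2 := hr.2
        rw [Set.mem_Ioc, not_and_or] at h2
        rcases h2 with h2 | h2
        · push_neg at h2
          have : c < ε := by rw [hcdef]; linarith
          linarith [hic.1]
        · push_neg at h2
          have : b < d := by rw [hddef]; linarith
          linarith [hic.2]
      have hfdY0 : ∀ r : ℝ, 0 < r → r ∉ Set.Icc ε b →
          fderiv ℝ Y (r • (ω : EuclideanSpace ℝ (Fin n))) = 0 := by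
        intro r hr hrIcc
        by_contra h
        exact (hsupp_sec r hr hrIcc) (support_fderiv_subset ℝ (f := Y) h)
      have hvanD : ∀ r ∈ Ioi (0:ℝ) \ Ioc c d, (deriv G r) ^ 2 * r ^ (2*q+1) = 0 := by
        intro r hr
        rw [hderivG r, hfdY0 r hr.1 (hnotIcc r hr)]
        simp
      have hvanF : ∀ r ∈ Ioi (0:ℝ) \ Ioc c d,
          F (r • (ω : EuclideanSpace ℝ (Fin n))) * r ^ (2*q+1) = 0 := by
        intro r hr
        rw [hF0 _ (hsupp_sec r hr.1 (hnotIcc r hr))]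
        ring
      have hIocIoi : Set.Ioc c d ⊆ Set.Ioi (0:ℝ) := fun r hr => lt_trans hc0 hr.1
      have hderivGcont : Continuous (deriv G) := by
        have heq : deriv G = fun r : ℝ =>
            (inner ℝ (fderiv ℝ Y (r • (ω : EuclideanSpace ℝ (Fin n)))
              (ω : EuclideanSpace ℝ (Fin n))) (ω : EuclideanSpace ℝ (Fin n)) : ℝ) :=
          funext hderivG
        rw [heq]
        apply Continuous.inner _ continuous_const
        have h1 : Continuous (fun r : ℝ => fderiv ℝ Y (r • (ω : EuclideanSpace ℝ (Fin n)))) :=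
          (hY.continuous_fderiv (by simp)).comp (continuous_id.smul continuous_const)
        exact ((ContinuousLinearMap.apply ℝ (EuclideanSpace ℝ (Fin n))
          (ω : EuclideanSpace ℝ (Fin n))).continuous).comp h1
      have hrpowcont : ContinuousOn (fun r : ℝ => r ^ (2*q+1)) (Set.Icc c d) := by
        intro r hr
        exact (Real.continuousAt_rpow_const r _
          (Or.inl (ne_of_gt (lt_of_lt_of_le hc0 hr.1)))).continuousWithinAt
      have hintD : IntegrableOn (fun r : ℝ => (deriv G r) ^ 2 * r ^ (2*q+1)) (Set.Ioc c d) :=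
        ((((hderivGcont.pow 2).continuousOn).mul hrpowcont).integrableOn_Icc).mono_set
          Set.Ioc_subset_Icc_self
      have hintF : IntegrableOn (fun r : ℝ =>
          F (r • (ω : EuclideanSpace ℝ (Fin n))) * r ^ (2*q+1)) (Set.Ioc c d) :=
        ((((hFcont.comp (continuous_id.smul continuous_const)).continuousOn).mul
          hrpowcont).integrableOn_Icc).mono_set Set.Ioc_subset_Icc_self
      have hDle : (∫ r in Ioi (0:ℝ), (deriv G r) ^ 2 * r ^ (2*q+1)) ≤
          (1/4) * ∫ r in Ioi (0:ℝ), F (r • (ω : EuclideanSpace ℝ (Fin n))) * r ^ (2*q+1) := by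
        rw [setIntegral_eq_of_subset_of_forall_diff_eq_zero measurableSet_Ioi hIocIoi hvanD,
          setIntegral_eq_of_subset_of_forall_diff_eq_zero measurableSet_Ioi hIocIoi hvanF,
          ← MeasureTheory.integral_const_mul]
        apply setIntegral_mono_on hintD (hintF.const_mul (1/4)) measurableSet_Ioc
        intro r hr
        have hr0 : (0:ℝ) < r := lt_trans hc0 hr.1
        have hrp : (0:ℝ) ≤ r ^ (2*q+1) := (Real.rpow_pos_of_pos hr0 _).le
        have hbd := radial_deriv_sq_bound Y hY (ω : EuclideanSpace ℝ (Fin n)) hω1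
          (r • (ω : EuclideanSpace ℝ (Fin n)))
        rw [hderivG r]
        calc (inner ℝ (fderiv ℝ Y (r • (ω : EuclideanSpace ℝ (Fin n)))
              (ω : EuclideanSpace ℝ (Fin n))) (ω : EuclideanSpace ℝ (Fin n)) : ℝ) ^ 2
                * r ^ (2*q+1)
            ≤ ((1/4) * F (r • (ω : EuclideanSpace ℝ (Fin n)))) * r ^ (2*q+1) :=
              mul_le_mul_of_nonneg_right hbd hrp
          _ = (1/4) * (F (r • (ω : EuclideanSpace ℝ (Fin n))) * r ^ (2*q+1)) := by ring
      have hBnonneg : (0:ℝ) ≤ ∫ r in Ioi (0:ℝ),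
          F (r • (ω : EuclideanSpace ℝ (Fin n))) * r ^ (2*q+1) := by
        apply setIntegral_nonneg measurableSet_Ioi
        intro r hr
        have hr0 : (0:ℝ) < r := hr
        have hFnn : (0:ℝ) ≤ F (r • (ω : EuclideanSpace ℝ (Fin n))) :=
          Finset.sum_nonneg fun i _ => Finset.sum_nonneg fun j _ => sq_nonneg _
        exact mul_nonneg hFnn (Real.rpow_pos_of_pos hr0 _).le
      calc (∫ r in Ioi (0:ℝ), G r ^ 2 * r ^ (2*q-1))
          ≤ (1/q^2) * ∫ r in Ioi (0:ℝ), (deriv G r) ^ 2 * r ^ (2*q+1) := hardy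
        _ ≤ (1/q^2) * ((1/4) * ∫ r in Ioi (0:ℝ),
              F (r • (ω : EuclideanSpace ℝ (Fin n))) * r ^ (2*q+1)) := by
            apply mul_le_mul_of_nonneg_left hDle (by positivity)
        _ = (1/(4*q^2)) * ∫ r in Ioi (0:ℝ),
              F (r • (ω : EuclideanSpace ℝ (Fin n))) * r ^ (2*q+1) := by ring
    · -- ω outside the angular sector: both sides vanish
      have hzL : Set.EqOn (fun r : ℝ => (r ^ (n-1)) *
          (Ω.indicator hL (r • (ω : EuclideanSpace ℝ (Fin n)))))
          (fun _ => (0:ℝ)) (Ioi (0:ℝ)) := by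
        intro r hr
        have hr' : (0:ℝ) < r := hr
        simp only [Set.indicator_of_notMem (fun hmem' => hS ((hmem r hr').mp hmem')),
          mul_zero]
      have hzR : Set.EqOn (fun r : ℝ => (r ^ (n-1)) *
          (Ω.indicator hR (r • (ω : EuclideanSpace ℝ (Fin n)))))
          (fun _ => (0:ℝ)) (Ioi (0:ℝ)) := by
        intro r hr
        have hr' : (0:ℝ) < r := hr
        simp only [Set.indicator_of_notMem (fun hmem' => hS ((hmem r hr').mp hmem')),
          mul_zero]
      rw [setIntegral_congr_fun measurableSet_Ioi hzL,
        setIntegral_congr_fun measurableSet_Ioi hzR]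
      simp
  -- final assembly
  have hLHS : (∫ x in Ω, hL x) = ∫ x, Ω.indicator hL x := (MeasureTheory.integral_indicator hΩmeas).symm
  have hRHS : (∫ x in Ω, hR x) = ∫ x, Ω.indicator hR x := (MeasureTheory.integral_indicator hΩmeas).symm
  calc (∫ x in Ω, hL x) = ∫ x, Ω.indicator hL x := hLHS
    _ = _ := hpolarL
    _ ≤ ∫ ω : sphere (0:EuclideanSpace ℝ (Fin n)) 1, (1/(4*q^2)) *
          (∫ r in Ioi (0:ℝ), (r ^ (n-1)) *
            (Ω.indicator hR (r • (ω : EuclideanSpace ℝ (Fin n)))))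
          ∂((volume : Measure (EuclideanSpace ℝ (Fin n))).toSphere) :=
        integral_mono hintL (hintR.const_mul _) hptω
    _ = (1/(4*q^2)) * ∫ ω : sphere (0:EuclideanSpace ℝ (Fin n)) 1,
          (∫ r in Ioi (0:ℝ), (r ^ (n-1)) *
            (Ω.indicator hR (r • (ω : EuclideanSpace ℝ (Fin n)))))
          ∂((volume : Measure (EuclideanSpace ℝ (Fin n))).toSphere) :=
        MeasureTheory.integral_const_mul _ _
    _ = (1/(4*q^2)) * ∫ x, Ω.indicator hR x := by rw [← hpolarR]
    _ = (1/(4*q^2)) * ∫ x in Ω, hR x := by rw [← hRHS]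
end

section
/- Let X₁ be a real Banach space and X₂ a normed real vector space. Let S : X₁ → X₂ be a continuous linear map and L : X₂ → X₁ a linear map with L(S f) = f for all f ∈ X₁. Let Q : X₂ → X₁ be a map with Q(0) = 0, and suppose there exist constants r₀ > 0 and λ ≥ 0 with λ‖S‖ < 1/2 such that ‖Q(S f₁) − Q(S f₂)‖_{X₁} ≤ λ‖S f₁ − S f₂‖_{X₂} whenever ‖f₁‖_{X₁} < r₀ and ‖f₂‖_{X₁} < r₀. Then for every f ∈ X₁ with ‖f‖_{X₁} < r₀/4 there exists f′ ∈ X₁ with ‖f′‖_{X₁} < r₀ such that the element h = S f′ ∈ X₂ satisfies L h + Q(h) = f. -/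
/-!
The solution is the fixed point of the Picard map `g ↦ f - Q (S g)`, which turns the equation into
`g + Q (S g) = f` once `L (S g) = g` is used. On the closed ball of radius `r₀ / 2` this map is
Lipschitz with constant `λ‖S‖ < 1/2`, and it maps the ball into itself because
`‖f‖ + λ‖S‖ · r₀ / 2 < r₀ / 4 + r₀ / 4`; the Banach fixed point theorem does the rest.
-/

open Set Metric NNReal Function

section FixedPoint

variable {α : Type*} {f : α → α} {K : ℝ≥0} {x : α} {r : ℝ}

theorem LipschitzOnWith.mapsTo_closedBall [PseudoMetricSpace α] (hf : LipschitzOnWith K f (closedBall x r))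
    (hr : dist (f x) x + K * r ≤ r) : MapsTo f (closedBall x r) (closedBall x r) := by
  intro y hy
  have hx : x ∈ closedBall x r := mem_closedBall_self (le_trans dist_nonneg (mem_closedBall.1 hy))
  calc dist (f y) x ≤ dist (f y) (f x) + dist (f x) x := dist_triangle _ _ _
    _ ≤ K * dist y x + dist (f x) x := by gcongr; exact hf.dist_le_mul y hy x hx
    _ ≤ K * r + dist (f x) x := by gcongr; exact mem_closedBall.1 hy
    _ ≤ r := by linarith

theorem LipschitzOnWith.exists_isFixedPt_closedBall [MetricSpace α] [CompleteSpace α]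
    (hf : LipschitzOnWith K f (closedBall x r)) (hK : K < 1) (hr : dist (f x) x + K * r ≤ r) :
    ∃ y ∈ closedBall x r, IsFixedPt f y := by
  have hr₀ : 0 ≤ r := by
    have : 0 ≤ (1 - K) * r := by linarith [dist_nonneg (x := f x) (y := x)]
    exact nonneg_of_mul_nonneg_right this (sub_pos.2 (NNReal.coe_lt_one.2 hK))
  have hmaps := hf.mapsTo_closedBall hr
  obtain ⟨y, hy, hfix, -⟩ := ContractingWith.exists_fixedPoint' isClosed_closedBall.isComplete
    hmaps ⟨hK, hf.mapsToRestrict hmaps⟩ (mem_closedBall_self hr₀) (edist_ne_top _ _)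
  exact ⟨y, hy, hfix⟩

end FixedPoint

theorem lipschitzOnWith_of_norm_sub_le_mul_norm_sub {E F G : Type*} [SeminormedAddCommGroup E]
    [NormedSpace ℝ E] [SeminormedAddCommGroup F] [NormedSpace ℝ F] [SeminormedAddCommGroup G]
    {S : E →L[ℝ] F} {g : E → G} {s : Set E} {lam : ℝ≥0}
    (hg : ∀ x ∈ s, ∀ y ∈ s, ‖g x - g y‖ ≤ lam * ‖S x - S y‖) :
    LipschitzOnWith (lam * ‖S‖₊) g s := by
  refine LipschitzOnWith.of_dist_le_mul fun x hx y hy => ?_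
  rw [dist_eq_norm, dist_eq_norm]
  calc ‖g x - g y‖ ≤ lam * ‖S (x - y)‖ := by rw [map_sub]; exact hg x hx y hy
    _ ≤ lam * (‖S‖ * ‖x - y‖) := by gcongr; exact S.le_opNorm _
    _ = ↑(lam * ‖S‖₊) * ‖x - y‖ := by push_cast; ring

theorem picard_scheme_general
    (X₁ X₂ : Type*) [NormedAddCommGroup X₁] [NormedSpace ℝ X₁] [CompleteSpace X₁]
    [NormedAddCommGroup X₂] [NormedSpace ℝ X₂]
    (S : X₁ →L[ℝ] X₂) (L : X₂ →ₗ[ℝ] X₁)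
    (hLS : ∀ f : X₁, L (S f) = f)
    (Q : X₂ → X₁) (hQ0 : Q 0 = 0)
    (r₀ lam : ℝ) (hlam : 0 ≤ lam) (hsmall : lam * ‖S‖ < 1 / 2)
    (hLip : ∀ f₁ f₂ : X₁, ‖f₁‖ < r₀ → ‖f₂‖ < r₀ →
      ‖Q (S f₁) - Q (S f₂)‖ ≤ lam * ‖S f₁ - S f₂‖) :
    ∀ f : X₁, ‖f‖ < r₀ / 4 →
      ∃ f' : X₁, ‖f'‖ < r₀ ∧ L (S f') + Q (S f') = f := by
  intro f hf
  have hr₀ : 0 < r₀ := by linarith [norm_nonneg f]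
  set K := lam.toNNReal * ‖S‖₊
  have hK : (K : ℝ) = lam * ‖S‖ := by simp [K, hlam]
  have hball : closedBall (0 : X₁) (r₀ / 2) ⊆ ball 0 r₀ := closedBall_subset_ball (by linarith)
  have hQS : LipschitzOnWith K (fun g => Q (S g)) (ball 0 r₀) :=
    lipschitzOnWith_of_norm_sub_le_mul_norm_sub fun x hx y hy => by
      rw [Real.coe_toNNReal _ hlam]
      exact hLip x y (mem_ball_zero_iff.1 hx) (mem_ball_zero_iff.1 hy)
  have hpicard : LipschitzOnWith K (fun g => f - Q (S g)) (closedBall 0 (r₀ / 2)) :=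
    LipschitzOnWith.of_dist_le_mul fun x hx y hy => by
      rw [dist_sub_left]; exact (hQS.mono hball).dist_le_mul x hx y hy
  obtain ⟨g, hg, hfix⟩ := hpicard.exists_isFixedPt_closedBall
    (by rw [← NNReal.coe_lt_coe, hK, NNReal.coe_one]; linarith)
    (by rw [hK]; simp only [map_zero, hQ0, sub_zero, dist_zero_right]; nlinarith)
  refine ⟨g, mem_ball_zero_iff.1 (hball hg), ?_⟩
  rw [hLS]
  exact eq_sub_iff_add_eq.mp hfix.eq.symm

/-- Abstract Picard iteration scheme for the nonlinear constraint equation: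
`S` is the (continuous linear) solution operator of the linearized problem,
`L` is a linear left quasi-inverse (`L (S f) = f`), and `Q` is a quadratic
remainder with `Q 0 = 0` satisfying a Lipschitz smallness condition on images of
small balls. Then for every sufficiently small `f` there is `f'` with `‖f'‖ < r₀`
such that `h = S f'` solves `L h + Q h = f`. -/
theorem picard_scheme
    (X₁ X₂ : Type*) [NormedAddCommGroup X₁] [NormedSpace ℝ X₁] [CompleteSpace X₁]
    [NormedAddCommGroup X₂] [NormedSpace ℝ X₂]
    (S : X₁ →L[ℝ] X₂) (L : X₂ →ₗ[ℝ] X₁)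
    (hLS : ∀ f : X₁, L (S f) = f)
    (Q : X₂ → X₁) (hQ0 : Q 0 = 0)
    (r₀ lam : ℝ) (hr₀ : 0 < r₀) (hlam : 0 ≤ lam) (hsmall : lam * ‖S‖ < 1 / 2)
    (hLip : ∀ f₁ f₂ : X₁, ‖f₁‖ < r₀ → ‖f₂‖ < r₀ →
      ‖Q (S f₁) - Q (S f₂)‖ ≤ lam * ‖S f₁ - S f₂‖) :
    ∀ f : X₁, ‖f‖ < r₀ / 4 →
      ∃ f' : X₁, ‖f'‖ < r₀ ∧ L (S f') + Q (S f') = f :=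
  picard_scheme_general X₁ X₂ S L hLS Q hQ0 r₀ lam hlam hsmall hLip
end
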